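/- In the neural field traveling wave setting with c ≥ 0 (using only: F continuous and nondecreasing, û ∈ C² strictly increasing with lim_{x→+∞}û = a₂ and lim_{x→+∞}û′ = 0, and σ²û″(x) = û(x) − ∫₀^∞ e^{−s}F(û(x+cs))ds for all x), for every x ∈ ℝ: û′(x)² ≥ (2/σ²) ∫_{û(x)}^{a₂} ( F(t) − t ) dt. -/

import Mathlib

open MeasureTheory Filter Set

/-!
Integrating `F` against the probability density `e^{-s}` on `(0, ∞)` can only increase `F ∘ û`
at `x`, because `û(x + cs) ≥ û(x)` for `c ≥ 0`; the profile equation therefore gives the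
differential inequality `σ² û″ + F(û) − û ≤ 0`. Multiplied by `û′ ≥ 0`, it says that the energy
`σ²/2 · û′² + ∫_{a₂}^{û} (F(t) − t) dt` is nonincreasing. As `x → +∞` the energy tends to `0`,
so it is nonnegative everywhere, which is the claimed bound.
-/

theorem le_setIntegral_exp_neg_mul {f : ℝ → ℝ} {b B : ℝ}
    (hf : AEStronglyMeasurable f (volume.restrict (Ioi 0)))
    (hb : ∀ s ∈ Ioi (0 : ℝ), b ≤ f s) (hB : ∀ s ∈ Ioi (0 : ℝ), f s ≤ B) :
    b ≤ ∫ s in Ioi 0, Real.exp (-s) * f s := by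
  have hexp : IntegrableOn (fun s => Real.exp (-s)) (Ioi 0) := by
    simpa using exp_neg_integrableOn_Ioi 0 one_pos
  have hint : IntegrableOn (fun s => Real.exp (-s) * f s) (Ioi 0) := by
    refine (hexp.mul_const (max |b| |B|)).mono' (Real.continuous_exp.comp continuous_neg
      |>.aestronglyMeasurable.mul hf) ?_
    filter_upwards [ae_restrict_mem measurableSet_Ioi] with s hs
    rw [norm_mul, Real.norm_of_nonneg (Real.exp_pos _).le, Real.norm_eq_abs]
    gcongr
    exact abs_le_max_abs_abs (hb s hs) (hB s hs)
  calc b = ∫ s in Ioi 0, Real.exp (-s) * b := by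
        rw [integral_mul_const, integral_exp_neg_Ioi_zero, one_mul]
    _ ≤ ∫ s in Ioi 0, Real.exp (-s) * f s :=
        setIntegral_mono_on (hexp.mul_const b) hint measurableSet_Ioi
          fun s hs => mul_le_mul_of_nonneg_left (hb s hs) (Real.exp_pos _).le

theorem le_setIntegral_exp_neg_mul_comp_add {F u : ℝ → ℝ} {c M : ℝ} (hc : 0 ≤ c)
    (hF_cont : Continuous F) (hF_mono : Monotone F) (hu_cont : Continuous u)
    (hu_mono : Monotone u) (hub : ∀ y, u y ≤ M) (x : ℝ) :
    F (u x) ≤ ∫ s in Ioi 0, Real.exp (-s) * F (u (x + c * s)) :=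
  le_setIntegral_exp_neg_mul (B := F M) (by fun_prop : Continuous _).aestronglyMeasurable
    (fun s hs => hF_mono <| hu_mono <| le_add_of_nonneg_right <| mul_nonneg hc (le_of_lt hs))
    (fun s _ => hF_mono (hub _))

theorem antitone_energy {u g : ℝ → ℝ} {k a : ℝ} (hu : ContDiff ℝ 2 u) (hg : Continuous g)
    (hu' : ∀ x, 0 ≤ deriv u x) (hode : ∀ x, k * deriv (deriv u) x + g (u x) ≤ 0) :
    Antitone fun x => k / 2 * deriv u x ^ 2 + ∫ t in a..u x, g t := by
  have hderiv : ∀ x, HasDerivAt (fun x => k / 2 * deriv u x ^ 2 + ∫ t in a..u x, g t)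
      (deriv u x * (k * deriv (deriv u) x + g (u x))) x := by
    intro x
    have hG : HasDerivAt (fun x => ∫ t in a..u x, g t) (g (u x) * deriv u x) x :=
      (hg.integral_hasStrictDerivAt a (u x)).hasDerivAt.comp x
        (hu.differentiable two_ne_zero x).hasDerivAt
    refine ((((hu.differentiable_deriv_two x).hasDerivAt.fun_pow 2).const_mul (k / 2)).fun_add
      hG).congr_deriv ?_
    ring
  refine antitone_of_deriv_nonpos (fun x => (hderiv x).differentiableAt) fun x => ?_
  rw [(hderiv x).deriv]
  exact mul_nonpos_of_nonneg_of_nonpos (hu' x) (hode x)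

/-- Pointwise lower bound on the slope of the traveling wave profile (used in the proof of
Proposition 4.2): `û′(x)² ≥ (2/σ²) ∫_{û(x)}^{a₂} (F(t) − t) dt`. -/
theorem stmt_13
    (σ c : ℝ) (hσ : 0 < σ) (hc : 0 ≤ c)
    (a₂ : ℝ)
    (F : ℝ → ℝ) (hF_cont : Continuous F) (hF_mono : Monotone F)
    (u : ℝ → ℝ) (hu : ContDiff ℝ 2 u) (hu_mono : StrictMono u)
    (hlim : Tendsto u atTop (nhds a₂)) (hlim' : Tendsto (deriv u) atTop (nhds 0))
    (hprofile : ∀ x, σ ^ 2 * deriv (deriv u) x =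
      u x - ∫ s in Ioi (0 : ℝ), Real.exp (-s) * F (u (x + c * s))) :
    ∀ x, 2 / σ ^ 2 * ∫ t in (u x)..a₂, (F t - t) ≤ (deriv u x) ^ 2 := by
  intro x
  have hub : ∀ y, u y ≤ a₂ := hu_mono.monotone.ge_of_tendsto hlim
  have hode : ∀ y, σ ^ 2 * deriv (deriv u) y + (F (u y) - u y) ≤ 0 := fun y => by
    linarith [hprofile y, le_setIntegral_exp_neg_mul_comp_add hc hF_cont hF_mono hu.continuous
      hu_mono.monotone hub y]
  have hE := antitone_energy (a := a₂) (g := fun t => F t - t) hu (by fun_prop)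
    (fun _ => hu_mono.monotone.deriv_nonneg) hode
  have hE_lim : Tendsto (fun y => σ ^ 2 / 2 * deriv u y ^ 2 + ∫ t in a₂..u y, (F t - t))
      atTop (nhds 0) := by
    have hG := ((intervalIntegral.continuous_primitive (μ := volume) (fun _ _ =>
      (hF_cont.sub continuous_id).intervalIntegrable _ _) a₂).tendsto a₂).comp hlim
    simpa using ((hlim'.pow 2).const_mul (σ ^ 2 / 2)).add hG
  have hE_nonneg := hE.le_of_tendsto hE_lim x
  rw [intervalIntegral.integral_symm] at hE_nonneg
  rw [div_mul_eq_mul_div, div_le_iff₀ (by positivity)]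
  linarith
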